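/- Let β ∈ ℝⁿ, α², ν, t₀ > 0, 0 < μ < 1, z(ξ) = α²‖ξ‖² + i(β·ξ) + ν, Λ(ξ) = z(ξ)/(1 - e^{-z(ξ)t₀}), and R²_μ(ξ) = Λ(ξ)/(1 + μ²‖ξ‖⁴). Then for all ξ ∈ ℝⁿ, |R²_μ(ξ)| < M₂/μ² where M₂ = max{2ν + 2α² + 2√n‖β‖_∞, 2/t₀ + 2√n‖β‖_∞/(ν t₀)}. -/

import Mathlib

/-!
Write `z = a + i b` with `a = α²‖ξ‖² + ν ≥ ν` and `|b| ≤ √n ‖β‖_∞ ‖ξ‖`. Since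
`|1 - e^{-z t₀}| ≥ 1 - e^{-a t₀}` and `1 / (1 - e^{-x}) < 1 + 1/x` (equivalently `1 + x < eˣ`),
`|Λ(ξ)| < (a + |b|) (1 + 1/(a t₀)) ≤ a + |b| + 1/t₀ + |b|/(ν t₀)`. Each term is a nonnegative
multiple of `‖ξ‖ᵏ` with `k ≤ 2`, and `μ² ‖ξ‖ᵏ ≤ 1 + μ² ‖ξ‖⁴` for `k ≤ 4` when `μ ≤ 1`; dividing by
`1 + μ²‖ξ‖⁴` gives at most `(α² + ν + c + 1/t₀ + c/(ν t₀)) / μ²` with `c = √n ‖β‖_∞`, and this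
sum is half the sum of the two entries of the maximum.
-/

open Complex

theorem EuclideanSpace.norm_le_sqrt_card_mul_iSup_abs {ι : Type*} [Fintype ι]
    (x : EuclideanSpace ℝ ι) : ‖x‖ ≤ √(Fintype.card ι) * ⨆ i, |x i| := by
  set B := ⨆ i, |x i|
  have hB : 0 ≤ B := Real.iSup_nonneg fun i => abs_nonneg (x i)
  have hle : ∀ i, |x i| ≤ B := le_ciSup (Set.finite_range _).bddAbove
  have hsum : ∑ i, ‖x i‖ ^ 2 ≤ Fintype.card ι * B ^ 2 := by
    calc ∑ i, ‖x i‖ ^ 2 ≤ ∑ _i : ι, B ^ 2 :=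
          Finset.sum_le_sum fun i _ => pow_le_pow_left₀ (norm_nonneg _) (hle i) 2
      _ = Fintype.card ι * B ^ 2 := by simp
  calc ‖x‖ = √(∑ i, ‖x i‖ ^ 2) := EuclideanSpace.norm_eq x
    _ ≤ √(Fintype.card ι * B ^ 2) := Real.sqrt_le_sqrt hsum
    _ = √(Fintype.card ι) * B := by rw [Real.sqrt_mul (Nat.cast_nonneg _), Real.sqrt_sq hB]

theorem Real.one_div_one_sub_exp_neg_lt {x : ℝ} (hx : 0 < x) :
    1 / (1 - Real.exp (-x)) < 1 + 1 / x := by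
  have hexp : x + 1 < Real.exp x := Real.add_one_lt_exp hx.ne'
  have hinv : Real.exp (-x) * Real.exp x = 1 := by rw [← Real.exp_add]; simp
  have hpos : 0 < 1 - Real.exp (-x) := by
    linarith [Real.exp_lt_one_iff.mpr (neg_lt_zero.mpr hx)]
  rw [div_lt_iff₀ hpos, one_add_div hx.ne', div_mul_eq_mul_div, lt_div_iff₀ hx]
  nlinarith [Real.exp_pos (-x)]

theorem Complex.norm_div_one_sub_exp_neg_mul_lt {z : ℂ} (hz : 0 < z.re) {t : ℝ} (ht : 0 < t) :
    ‖z / (1 - exp (-(z * t)))‖ < ‖z‖ * (1 + 1 / (z.re * t)) := by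
  have hx : 0 < z.re * t := mul_pos hz ht
  have hpos : 0 < 1 - Real.exp (-(z.re * t)) := by
    linarith [Real.exp_lt_one_iff.mpr (neg_lt_zero.mpr hx)]
  have hden : 1 - Real.exp (-(z.re * t)) ≤ ‖1 - exp (-(z * t))‖ := by
    simpa [Complex.norm_exp] using norm_sub_norm_le (1 : ℂ) (exp (-(z * t)))
  have hz0 : 0 < ‖z‖ := norm_pos_iff.mpr fun h => by simp [h] at hz
  calc ‖z / (1 - exp (-(z * t)))‖ ≤ ‖z‖ * (1 / (1 - Real.exp (-(z.re * t)))) := by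
        rw [norm_div, mul_one_div]; gcongr
    _ < ‖z‖ * (1 + 1 / (z.re * t)) := by
        gcongr; exact Real.one_div_one_sub_exp_neg_lt hx

theorem add_mul_one_add_one_div_le {a d t ν : ℝ} (hν : 0 < ν) (hνa : ν ≤ a) (ht : 0 < t)
    (hd : 0 ≤ d) : (a + d) * (1 + 1 / (a * t)) ≤ a + d + 1 / t + d / (ν * t) := by
  have ha : 0 < a := hν.trans_le hνa
  have hda : d / (a * t) ≤ d / (ν * t) := by gcongr
  have hexpand : (a + d) * (1 + 1 / (a * t)) = a + d + 1 / t + d / (a * t) := by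
    field_simp
    ring
  linarith

theorem pow_le_one_add_pow {s : ℝ} (hs : 0 ≤ s) {k m : ℕ} (hkm : k ≤ m) :
    s ^ k ≤ 1 + s ^ m := by
  rcases le_total s 1 with h | h
  · linarith [pow_le_one₀ hs h (n := k), pow_nonneg hs m]
  · linarith [pow_le_pow_right₀ h hkm]

theorem mul_pow_div_one_add_sq_mul_pow_le {μ s x : ℝ} (hμ0 : 0 < μ) (hμ1 : μ ≤ 1) (hs : 0 ≤ s)
    (hx : 0 ≤ x) {k m : ℕ} (hkm : k ≤ m) :
    x * s ^ k / (1 + μ ^ 2 * s ^ m) ≤ x / μ ^ 2 := by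
  have hμ2 : μ ^ 2 ≤ 1 := pow_le_one₀ hμ0.le hμ1
  have hkey : μ ^ 2 * s ^ k ≤ 1 + μ ^ 2 * s ^ m := by
    nlinarith [pow_le_one_add_pow hs hkm, pow_nonneg hs m]
  rw [div_le_div_iff₀ (by positivity) (by positivity)]
  calc x * s ^ k * μ ^ 2 = x * (μ ^ 2 * s ^ k) := by ring
    _ ≤ x * (1 + μ ^ 2 * s ^ m) := mul_le_mul_of_nonneg_left hkey hx

theorem add_div_one_add_sq_mul_pow_four_le {α ν t μ s b c : ℝ} (hα : 0 ≤ α) (hν : 0 ≤ ν)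
    (ht : 0 ≤ t) (hμ0 : 0 < μ) (hμ1 : μ ≤ 1) (hs : 0 ≤ s) (hc : 0 ≤ c) (hb : |b| ≤ c * s) :
    (α * s ^ 2 + ν + |b| + 1 / t + |b| / (ν * t)) / (1 + μ ^ 2 * s ^ 4) ≤
      (α + ν + c + 1 / t + c / (ν * t)) / μ ^ 2 := by
  have bound {x : ℝ} (hx : 0 ≤ x) {k : ℕ} (hk : k ≤ 4) :=
    mul_pow_div_one_add_sq_mul_pow_le hμ0 hμ1 hs hx hk
  have hbt : |b| / (ν * t) ≤ c / (ν * t) * s ^ 1 := by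
    rw [pow_one, div_mul_eq_mul_div]; gcongr
  calc (α * s ^ 2 + ν + |b| + 1 / t + |b| / (ν * t)) / (1 + μ ^ 2 * s ^ 4)
      ≤ (α * s ^ 2 + ν * s ^ 0 + c * s ^ 1 + 1 / t * s ^ 0 + c / (ν * t) * s ^ 1) /
          (1 + μ ^ 2 * s ^ 4) := by
        gcongr ?_ / _
        simp only [pow_zero, mul_one, pow_one]
        linarith
    _ = α * s ^ 2 / (1 + μ ^ 2 * s ^ 4) + ν * s ^ 0 / (1 + μ ^ 2 * s ^ 4) +
          c * s ^ 1 / (1 + μ ^ 2 * s ^ 4) + 1 / t * s ^ 0 / (1 + μ ^ 2 * s ^ 4) +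
          c / (ν * t) * s ^ 1 / (1 + μ ^ 2 * s ^ 4) := by ring
    _ ≤ α / μ ^ 2 + ν / μ ^ 2 + c / μ ^ 2 + 1 / t / μ ^ 2 + c / (ν * t) / μ ^ 2 := by
        gcongr ?_ + ?_ + ?_ + ?_ + ?_ <;> apply bound <;> first | positivity | norm_num
    _ = (α + ν + c + 1 / t + c / (ν * t)) / μ ^ 2 := by ring

theorem R16_bound {n : ℕ} (β : EuclideanSpace ℝ (Fin n))
    (α2 ν t0 μ : ℝ) (hα : 0 < α2) (hν : 0 < ν) (ht : 0 < t0)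
    (hμ0 : 0 < μ) (hμ1 : μ < 1) :
    ∀ ξ : EuclideanSpace ℝ (Fin n),
      ‖((((α2 * ‖ξ‖ ^ 2 + ν : ℝ) : ℂ) + (inner ℝ β ξ : ℝ) * Complex.I) /
            (1 - Complex.exp
              (-((((α2 * ‖ξ‖ ^ 2 + ν : ℝ) : ℂ) + (inner ℝ β ξ : ℝ) * Complex.I) * t0)))) /
          ((1 + μ ^ 2 * ‖ξ‖ ^ 4 : ℝ) : ℂ)‖ <
        (max (2 * ν + 2 * α2 + 2 * Real.sqrt n * (⨆ i, |β i|)) (2 / t0 + 2 * Real.sqrt n * (⨆ i, |β i|) / (ν * t0))) / μ ^ 2 := by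
  intro ξ
  set a := α2 * ‖ξ‖ ^ 2 + ν
  set b := inner ℝ β ξ
  set c := Real.sqrt n * ⨆ i, |β i|
  have hνa : ν ≤ a := le_add_of_nonneg_left (by positivity)
  have hc : 0 ≤ c := mul_nonneg (Real.sqrt_nonneg _) (Real.iSup_nonneg fun i => abs_nonneg _)
  have hb : |b| ≤ c * ‖ξ‖ := by
    have := EuclideanSpace.norm_le_sqrt_card_mul_iSup_abs β
    rw [Fintype.card_fin] at this
    exact (abs_real_inner_le_norm β ξ).trans (mul_le_mul_of_nonneg_right this (norm_nonneg ξ))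
  have hz : ‖(a : ℂ) + b * I‖ ≤ a + |b| := by
    simpa [abs_of_pos (hν.trans_le hνa)] using norm_le_abs_re_add_abs_im ((a : ℂ) + b * I)
  have hre : ((a : ℂ) + b * I).re = a := by simp
  have hΛ := norm_div_one_sub_exp_neg_mul_lt (hre ▸ hν.trans_le hνa) ht
  rw [hre] at hΛ
  calc _ = ‖((a : ℂ) + b * I) / (1 - exp (-(((a : ℂ) + b * I) * t0)))‖ / (1 + μ ^ 2 * ‖ξ‖ ^ 4) := by
        rw [norm_div, norm_real, Real.norm_of_nonneg (by positivity)]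
    _ < (a + |b|) * (1 + 1 / (a * t0)) / (1 + μ ^ 2 * ‖ξ‖ ^ 4) := by
        gcongr
        exact hΛ.trans_le (by gcongr)
    _ ≤ (a + |b| + 1 / t0 + |b| / (ν * t0)) / (1 + μ ^ 2 * ‖ξ‖ ^ 4) := by
        gcongr; exact add_mul_one_add_one_div_le hν hνa ht (abs_nonneg b)
    _ ≤ (α2 + ν + c + 1 / t0 + c / (ν * t0)) / μ ^ 2 :=
        add_div_one_add_sq_mul_pow_four_le hα.le hν.le ht.le hμ0 hμ1.le (norm_nonneg ξ) hc hb
    _ ≤ max (2 * ν + 2 * α2 + 2 * c) (2 / t0 + 2 * c / (ν * t0)) / μ ^ 2 := by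
        gcongr
        have h2 : 2 / t0 + 2 * c / (ν * t0) = 2 * (1 / t0 + c / (ν * t0)) := by ring
        linarith [h2, le_max_left (2 * ν + 2 * α2 + 2 * c) (2 / t0 + 2 * c / (ν * t0)),
          le_max_right (2 * ν + 2 * α2 + 2 * c) (2 / t0 + 2 * c / (ν * t0))]
    _ = _ := by simp only [c, mul_assoc]
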